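/- arXiv:1901.10837 — 4 statements merged into one kernel-verified Lean document; each statement's English description precedes it below -/
import Mathlib

section
/- Under MC noise on the sensitive attribute with parameters α, β restricted to the event Y = 1 yielding parameters α', β' ∈ (0,1) with α' + β' < 1 (as in Lemma 1), for any bounded fairness loss L and classifier f: the equality-of-opportunity disparity satisfies |E_{D_{0,1,corr}}[L(f)] − E_{D_{1,1,corr}}[L(f)]| = (1 − α' − β')·|E_{D_{0,1}}[L(f)] − E_{D_{1,1}}[L(f)]|, hence the clean EO constraint at tolerance τ is equivalent to the corrupted EO constraint at tolerance τ·(1 − α' − β'). -/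
/-!
Each corrupted group distribution is a mixture of the two clean ones and the expected loss is
affine in the mixture, so the corrupted disparity is the clean one multiplied by the
determinant `1 - α' - β'` of the mixing matrix, which is positive.
-/

open MeasureTheory

theorem integral_ofReal_smul_add_ofReal_smul {α G : Type*} [MeasurableSpace α]
    [NormedAddCommGroup G] [NormedSpace ℝ G] {μ ν : Measure α} {g : α → G}
    (hμ : Integrable g μ) (hν : Integrable g ν) {a b : ℝ} (ha : 0 ≤ a) (hb : 0 ≤ b) :
    ∫ x, g x ∂(ENNReal.ofReal a • μ + ENNReal.ofReal b • ν)
      = a • ∫ x, g x ∂μ + b • ∫ x, g x ∂ν := by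
  rw [integral_add_measure (hμ.smul_measure ENNReal.ofReal_ne_top)
      (hν.smul_measure ENNReal.ofReal_ne_top), integral_smul_measure, integral_smul_measure,
    ENNReal.toReal_ofReal ha, ENNReal.toReal_ofReal hb]

theorem abs_mix_sub_mix {α β : ℝ} (h : α + β ≤ 1) (p q : ℝ) :
    |(β * p + (1 - β) * q) - ((1 - α) * p + α * q)| = (1 - α - β) * |q - p| := by
  rw [show β * p + (1 - β) * q - ((1 - α) * p + α * q) = (1 - α - β) * (q - p) by ring,
    abs_mul, abs_of_nonneg (by linarith)]

/-- Theorem 1, EO case: under MC noise restricted to `Y = 1` with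
parameters `α', β'`, the EO disparity scales by `(1 - α' - β')`, hence the clean EO
constraint at tolerance `τ` is equivalent to the corrupted one at `τ * (1 - α' - β')`. -/
theorem mc_eo_disparity_scaling
    {𝓧 : Type*} [MeasurableSpace 𝓧]
    (D11 D01 : Measure 𝓧) [IsProbabilityMeasure D11] [IsProbabilityMeasure D01]
    (α' β' : ℝ) (hα' : α' ∈ Set.Ioo (0:ℝ) 1) (hβ' : β' ∈ Set.Ioo (0:ℝ) 1)
    (hαβ' : α' + β' < 1)
    (D11c D01c : Measure 𝓧)
    (hD11c : D11c = ENNReal.ofReal (1 - α') • D11 + ENNReal.ofReal α' • D01)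
    (hD01c : D01c = ENNReal.ofReal β' • D11 + ENNReal.ofReal (1 - β') • D01)
    (f : 𝓧 → ℝ) (L : ℝ → ℝ) (hmeas : Measurable fun x => L (f x))
    (C : ℝ) (hbound : ∀ x, |L (f x)| ≤ C) :
    |(∫ x, L (f x) ∂D01c) - (∫ x, L (f x) ∂D11c)|
        = (1 - α' - β') * |(∫ x, L (f x) ∂D01) - (∫ x, L (f x) ∂D11)| ∧
      ∀ τ : ℝ, 0 < τ →
        (|(∫ x, L (f x) ∂D01) - (∫ x, L (f x) ∂D11)| ≤ τ ↔
          |(∫ x, L (f x) ∂D01c) - (∫ x, L (f x) ∂D11c)| ≤ τ * (1 - α' - β')) := by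
  have hintegrable :
      ∀ (μ : Measure 𝓧) [IsProbabilityMeasure μ], Integrable (fun x => L (f x)) μ :=
    fun _ _ => .of_bound hmeas.aestronglyMeasurable C (.of_forall hbound)
  have hscale : |(∫ x, L (f x) ∂D01c) - (∫ x, L (f x) ∂D11c)|
      = (1 - α' - β') * |(∫ x, L (f x) ∂D01) - (∫ x, L (f x) ∂D11)| := by
    rw [hD11c, hD01c,
      integral_ofReal_smul_add_ofReal_smul (hintegrable D11) (hintegrable D01)
        (by linarith [hβ'.1]) hα'.1.le,
      integral_ofReal_smul_add_ofReal_smul (hintegrable D11) (hintegrable D01)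
        hβ'.1.le (by linarith [hα'.1])]
    exact abs_mix_sub_mix hαβ'.le _ _
  refine ⟨hscale, fun τ _ => ?_⟩
  rw [hscale, mul_comm τ]
  exact (mul_le_mul_iff_right₀ (by linarith)).symm
end

section
/- Under MC noise on the sensitive attribute with parameters α, β ∈ (0,1), α + β < 1, for any bounded classifier score c and tolerance τ > 0: if max_a |E_{Dcorr}[c(X)|A=a] − E_{Dcorr}[c(X)]| < (1/2)·τ·(1−α−β), then max_a |E_D[c(X)|A=a] − E_D[c(X)]| < τ. -/
/-! Deviations from the overall mean mix like the conditional laws: if `u`, `v` are the clean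
deviations, the corrupted ones are `a = (1-α) u + α v` and `b = β u + (1-β) v`. Inverting this
mixing matrix, of determinant `1-α-β`, gives `(1-α-β) u = (1-β) a - α b`, so `|a|, |b| < ε`
forces `(1-α-β) |u| < (1-β+α) ε ≤ 2ε`, and symmetrically for `v`. -/

open MeasureTheory ProbabilityTheory

section Mixing

variable {α β u v τ : ℝ}

theorem abs_lt_of_abs_mix_lt (hα : 0 ≤ α) (hβ : 0 ≤ β) (hαβ : α + β < 1)
    (ha : |(1 - α) * u + α * v| < 1 / 2 * τ * (1 - α - β))
    (hb : |β * u + (1 - β) * v| < 1 / 2 * τ * (1 - α - β)) :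
    |u| < τ := by
  set a := (1 - α) * u + α * v
  set b := β * u + (1 - β) * v
  have hdet : 0 < 1 - α - β := by linarith
  have hτ : 0 < τ := by nlinarith [abs_nonneg a]
  have hinv : (1 - α - β) * u = (1 - β) * a - α * b := by ring
  have key : (1 - α - β) * |u| < (1 - α - β) * τ := calc
    (1 - α - β) * |u| = |(1 - β) * a - α * b| := by
      rw [← hinv, abs_mul, abs_of_pos hdet]
    _ ≤ (1 - β) * |a| + α * |b| := by
      refine (abs_sub _ _).trans_eq ?_
      rw [abs_mul, abs_mul, abs_of_pos (by linarith : (0:ℝ) < 1 - β), abs_of_nonneg hα]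
    _ < (1 - β + α) * (1 / 2 * τ * (1 - α - β)) := by
      have := mul_lt_mul_of_pos_left ha (by linarith : (0:ℝ) < 1 - β)
      have := mul_le_mul_of_nonneg_left hb.le hα
      linarith
    _ = (1 - β + α) / 2 * ((1 - α - β) * τ) := by ring
    _ ≤ (1 - α - β) * τ := mul_le_of_le_one_left (mul_pos hdet hτ).le (by linarith)
  exact lt_of_mul_lt_mul_left key hdet.le

theorem max_abs_lt_of_max_abs_mix_lt (hα : 0 ≤ α) (hβ : 0 ≤ β) (hαβ : α + β < 1)
    (h : max |(1 - α) * u + α * v| |β * u + (1 - β) * v| < 1 / 2 * τ * (1 - α - β)) :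
    max |u| |v| < τ := by
  obtain ⟨ha, hb⟩ := max_lt_iff.mp h
  have hdet : 1 - β - α = 1 - α - β := by ring
  refine max_lt (abs_lt_of_abs_mix_lt hα hβ hαβ ha hb)
    (abs_lt_of_abs_mix_lt (u := v) (v := u) hβ hα (by linarith) ?_ ?_)
  · rwa [add_comm, hdet]
  · rwa [add_comm, hdet]

end Mixing

theorem integral_add_ofReal_smul_measure {𝓧 : Type*} [MeasurableSpace 𝓧] {ν₁ ν₀ : Measure 𝓧}
    {f : 𝓧 → ℝ} (hf₁ : Integrable f ν₁) (hf₀ : Integrable f ν₀) {r₁ r₀ : ℝ}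
    (hr₁ : 0 ≤ r₁) (hr₀ : 0 ≤ r₀) :
    ∫ x, f x ∂(ENNReal.ofReal r₁ • ν₁ + ENNReal.ofReal r₀ • ν₀)
      = r₁ * ∫ x, f x ∂ν₁ + r₀ * ∫ x, f x ∂ν₀ := by
  rw [integral_add_measure (hf₁.smul_measure ENNReal.ofReal_ne_top)
      (hf₀.smul_measure ENNReal.ofReal_ne_top),
    integral_smul_measure, integral_smul_measure,
    ENNReal.toReal_ofReal hr₁, ENNReal.toReal_ofReal hr₀, smul_eq_mul, smul_eq_mul]

theorem integral_comp_eq_of_map_eq_mix {Ω 𝓧 : Type*} [MeasurableSpace Ω] [MeasurableSpace 𝓧]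
    {ν ν₁ ν₀ : Measure Ω} [IsFiniteMeasure ν₁] [IsFiniteMeasure ν₀]
    {X : Ω → 𝓧} (hX : Measurable X) {c : 𝓧 → ℝ} (hc : Measurable c) {C : ℝ}
    (hbound : ∀ x, |c x| ≤ C) {r₁ r₀ : ℝ} (hr₁ : 0 ≤ r₁) (hr₀ : 0 ≤ r₀)
    (hmix : ν.map X = ENNReal.ofReal r₁ • ν₁.map X + ENNReal.ofReal r₀ • ν₀.map X) :
    ∫ ω, c (X ω) ∂ν = r₁ * ∫ ω, c (X ω) ∂ν₁ + r₀ * ∫ ω, c (X ω) ∂ν₀ := by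
  have hint (ρ : Measure 𝓧) [IsFiniteMeasure ρ] : Integrable c ρ :=
    .of_bound hc.aestronglyMeasurable C (.of_forall hbound)
  simp only [← integral_map hX.aemeasurable hc.aestronglyMeasurable]
  rw [hmix, integral_add_ofReal_smul_measure (hint _) (hint _) hr₁ hr₀]

theorem agarwal_constraint_mc_half_sufficient_general
    {Ω 𝓧 : Type*} [MeasurableSpace Ω] [MeasurableSpace 𝓧]
    (μ : Measure Ω) [IsProbabilityMeasure μ]
    (X : Ω → 𝓧) (A Acorr : Ω → Fin 2)
    (hX : Measurable X)
    (α β : ℝ) (hα : α ∈ Set.Ioo (0:ℝ) 1) (hβ : β ∈ Set.Ioo (0:ℝ) 1) (hαβ : α + β < 1)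
    (hmix1 : (μ[|{ω | Acorr ω = 1}]).map X
        = ENNReal.ofReal (1 - α) • (μ[|{ω | A ω = 1}]).map X
          + ENNReal.ofReal α • (μ[|{ω | A ω = 0}]).map X)
    (hmix0 : (μ[|{ω | Acorr ω = 0}]).map X
        = ENNReal.ofReal β • (μ[|{ω | A ω = 1}]).map X
          + ENNReal.ofReal (1 - β) • (μ[|{ω | A ω = 0}]).map X)
    (c : 𝓧 → ℝ) (hc : Measurable c) (C : ℝ) (hbound : ∀ x, |c x| ≤ C)
    (τ : ℝ)
    (hcon : max |(∫ ω, c (X ω) ∂μ[|{ω | Acorr ω = 1}]) - ∫ ω, c (X ω) ∂μ|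
        |(∫ ω, c (X ω) ∂μ[|{ω | Acorr ω = 0}]) - ∫ ω, c (X ω) ∂μ|
        < (1/2) * τ * (1 - α - β)) :
    max |(∫ ω, c (X ω) ∂μ[|{ω | A ω = 1}]) - ∫ ω, c (X ω) ∂μ|
        |(∫ ω, c (X ω) ∂μ[|{ω | A ω = 0}]) - ∫ ω, c (X ω) ∂μ| < τ := by
  have e₁ := integral_comp_eq_of_map_eq_mix hX hc hbound (by linarith [hα.2]) hα.1.le hmix1
  have e₀ := integral_comp_eq_of_map_eq_mix hX hc hbound hβ.1.le (by linarith [hβ.2]) hmix0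
  refine max_abs_lt_of_max_abs_mix_lt hα.1.le hβ.1.le hαβ ?_
  convert hcon using 3 <;> [rw [e₁]; rw [e₀]] <;> ring

/-- Corollary 2, DP case: enforcing the corrupted Agarwal-style
constraint at tolerance `(1/2)·τ·(1-α-β)` guarantees the clean constraint at `τ`. -/
theorem agarwal_constraint_mc_half_sufficient
    {Ω 𝓧 : Type*} [MeasurableSpace Ω] [MeasurableSpace 𝓧]
    (μ : Measure Ω) [IsProbabilityMeasure μ]
    (X : Ω → 𝓧) (A Acorr : Ω → Fin 2)
    (hX : Measurable X) (hA : Measurable A) (hAc : Measurable Acorr)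
    (α β : ℝ) (hα : α ∈ Set.Ioo (0:ℝ) 1) (hβ : β ∈ Set.Ioo (0:ℝ) 1) (hαβ : α + β < 1)
    (hmix1 : (μ[|{ω | Acorr ω = 1}]).map X
        = ENNReal.ofReal (1 - α) • (μ[|{ω | A ω = 1}]).map X
          + ENNReal.ofReal α • (μ[|{ω | A ω = 0}]).map X)
    (hmix0 : (μ[|{ω | Acorr ω = 0}]).map X
        = ENNReal.ofReal β • (μ[|{ω | A ω = 1}]).map X
          + ENNReal.ofReal (1 - β) • (μ[|{ω | A ω = 0}]).map X)
    (c : 𝓧 → ℝ) (hc : Measurable c) (C : ℝ) (hbound : ∀ x, |c x| ≤ C)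
    (τ : ℝ) (hτ : 0 < τ)
    (hcon : max |(∫ ω, c (X ω) ∂μ[|{ω | Acorr ω = 1}]) - ∫ ω, c (X ω) ∂μ|
        |(∫ ω, c (X ω) ∂μ[|{ω | Acorr ω = 0}]) - ∫ ω, c (X ω) ∂μ|
        < (1/2) * τ * (1 - α - β)) :
    max |(∫ ω, c (X ω) ∂μ[|{ω | A ω = 1}]) - ∫ ω, c (X ω) ∂μ|
        |(∫ ω, c (X ω) ∂μ[|{ω | A ω = 0}]) - ∫ ω, c (X ω) ∂μ| < τ :=
  agarwal_constraint_mc_half_sufficient_general μ X A Acorr hX α β hα hβ hαβ hmix1 hmix0 c hc C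
    hbound τ hcon
end

section
/- CCN noise with flip probabilities ρ⁺, ρ⁻ ∈ [0,1), ρ⁺ + ρ⁻ < 1 on a binary attribute A with clean conditionals D1, D0 and base rate π = P[A=1] yields corrupted conditional distributions that are of MC form: P(· | A_noisy = 1) = (1-α)D1 + αD0 and P(· | A_noisy = 0) = βD1 + (1-β)D0, where α = (1−π)ρ⁻ / (π(1−ρ⁺) + (1−π)ρ⁻) and β = πρ⁺ / (πρ⁺ + (1−π)(1−ρ⁻)), assuming both denominators are positive. Moreover α + β < 1. -/
/-!
Split each event `{Anoisy = j}` along the clean label `A`. The CCN channel acts on the two pieces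
by the constant factors `1 - ρ⁺, ρ⁻` (for `j = 1`) or `ρ⁺, 1 - ρ⁻` (for `j = 0`), so the law of `Z`
restricted to `{Anoisy = j}` is a combination of its laws restricted to `{A = 1}` and `{A = 0}`.
Normalising by `P[Anoisy = j]` turns this into a convex combination of the clean conditionals,
whose weights are the Bayes posteriors `α` and `β`. Finally
`1 - α - β ∝ π (1 - π) (1 - ρ⁺ - ρ⁻) > 0`.
-/

open MeasureTheory ProbabilityTheory
open scoped ENNReal

lemma setOf_eq_zero_eq_compl {Ω : Type*} (A : Ω → Fin 2) : {ω | A ω = 0} = {ω | A ω = 1}ᶜ := by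
  ext ω
  change A ω = 0 ↔ ¬A ω = 1
  omega

section

variable {Ω 𝓩 : Type*} [MeasurableSpace Ω] [MeasurableSpace 𝓩] {μ : Measure Ω} {Z : Ω → 𝓩}

lemma map_restrict_eq_smul_map_cond [IsFiniteMeasure μ] (s : Set Ω) :
    (μ.restrict s).map Z = μ s • (μ[|s]).map Z := by
  rw [ProbabilityTheory.cond, Measure.map_smul, smul_smul]
  by_cases hs : μ s = 0
  · simp [Measure.restrict_eq_zero.mpr hs]
  · rw [ENNReal.mul_inv_cancel hs (measure_ne_top μ s), one_smul]

lemma map_cond_eq_of_map_restrict_eq [IsFiniteMeasure μ] (hZ : Measurable Z)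
    {t s₁ s₀ : Set Ω} {a b : ℝ≥0∞}
    (h : (μ.restrict t).map Z = a • (μ.restrict s₁).map Z + b • (μ.restrict s₀).map Z) :
    (μ[|t]).map Z = (a * μ s₁ / (a * μ s₁ + b * μ s₀)) • (μ[|s₁]).map Z
      + (b * μ s₀ / (a * μ s₁ + b * μ s₀)) • (μ[|s₀]).map Z := by
  have hμt : μ t = a * μ s₁ + b * μ s₀ := by
    simpa [Measure.map_apply hZ MeasurableSet.univ] using congr($h Set.univ)
  rw [ProbabilityTheory.cond, Measure.map_smul, h, map_restrict_eq_smul_map_cond s₁,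
    map_restrict_eq_smul_map_cond s₀, hμt, smul_add, smul_smul, smul_smul, smul_smul, smul_smul]
  simp only [ENNReal.div_eq_inv_mul, mul_assoc]

lemma map_cond_eq_ofReal_mixture [IsFiniteMeasure μ] (hZ : Measurable Z)
    {t s₁ s₀ : Set Ω} {a b p q : ℝ} (ha : 0 ≤ a) (hb : 0 ≤ b) (hp : 0 ≤ p) (hq : 0 ≤ q)
    (hd : 0 < a * p + b * q) (hs₁ : μ s₁ = ENNReal.ofReal p) (hs₀ : μ s₀ = ENNReal.ofReal q)
    (h : (μ.restrict t).map Z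
      = ENNReal.ofReal a • (μ.restrict s₁).map Z + ENNReal.ofReal b • (μ.restrict s₀).map Z) :
    (μ[|t]).map Z = ENNReal.ofReal (a * p / (a * p + b * q)) • (μ[|s₁]).map Z
      + ENNReal.ofReal (b * q / (a * p + b * q)) • (μ[|s₀]).map Z := by
  rw [map_cond_eq_of_map_restrict_eq hZ h, hs₁, hs₀, ← ENNReal.ofReal_mul ha,
    ← ENNReal.ofReal_mul hb, ← ENNReal.ofReal_add (by positivity) (by positivity),
    ENNReal.ofReal_div_of_pos hd, ENNReal.ofReal_div_of_pos hd]

lemma map_restrict_eq_of_measure_inter_label (hZ : Measurable Z) {A : Ω → Fin 2}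
    (hA : Measurable A) {t : Set Ω} (ht : MeasurableSet t) {c₁ c₀ : ℝ≥0∞}
    (h₁ : ∀ U, MeasurableSet U →
      μ (Z ⁻¹' U ∩ ({ω | A ω = 1} ∩ t)) = c₁ * μ (Z ⁻¹' U ∩ {ω | A ω = 1}))
    (h₀ : ∀ U, MeasurableSet U →
      μ (Z ⁻¹' U ∩ ({ω | A ω = 0} ∩ t)) = c₀ * μ (Z ⁻¹' U ∩ {ω | A ω = 0})) :
    (μ.restrict t).map Z
      = c₁ • (μ.restrict {ω | A ω = 1}).map Z + c₀ • (μ.restrict {ω | A ω = 0}).map Z := by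
  ext U hU
  have hsplit : Z ⁻¹' U ∩ t
      = Z ⁻¹' U ∩ ({ω | A ω = 1} ∩ t) ∪ Z ⁻¹' U ∩ ({ω | A ω = 0} ∩ t) := by
    rw [← Set.inter_union_distrib_left, ← Set.union_inter_distrib_right,
      setOf_eq_zero_eq_compl, Set.union_compl_self, Set.univ_inter]
  have hdisj : Disjoint (Z ⁻¹' U ∩ ({ω | A ω = 1} ∩ t)) (Z ⁻¹' U ∩ ({ω | A ω = 0} ∩ t)) := by
    rw [setOf_eq_zero_eq_compl]
    exact disjoint_compl_right.mono
      (Set.inter_subset_right.trans Set.inter_subset_left)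
      (Set.inter_subset_right.trans Set.inter_subset_left)
  rw [Measure.map_apply hZ hU, Measure.restrict_apply (hZ hU), hsplit,
    measure_union hdisj ((hZ hU).inter ((hA (measurableSet_singleton 0)).inter ht)), h₁ U hU,
    h₀ U hU]
  simp [Measure.map_apply hZ hU, Measure.restrict_apply (hZ hU)]

end

lemma ccn_weights_add_lt_one {π ρp ρm : ℝ} (hπ0 : 0 < π) (hπ1 : π < 1) (hρsum : ρp + ρm < 1)
    (hden1 : 0 < π * (1 - ρp) + (1 - π) * ρm) (hden0 : 0 < π * ρp + (1 - π) * (1 - ρm)) :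
    (1 - π) * ρm / (π * (1 - ρp) + (1 - π) * ρm) + π * ρp / (π * ρp + (1 - π) * (1 - ρm)) < 1 := by
  rw [div_add_div _ _ hden1.ne' hden0.ne', div_lt_one (mul_pos hden1 hden0)]
  nlinarith [mul_pos (mul_pos hπ0 (sub_pos.mpr hπ1)) (sub_pos.mpr hρsum)]

theorem ccn_is_mc_general
    {Ω 𝓩 : Type*} [MeasurableSpace Ω] [MeasurableSpace 𝓩]
    (μ : Measure Ω) [IsProbabilityMeasure μ]
    (Z : Ω → 𝓩) (A Anoisy : Ω → Fin 2)
    (hZ : Measurable Z) (hA : Measurable A) (hAn : Measurable Anoisy)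
    (ρp ρm : ℝ) (hρp : 0 ≤ ρp) (hρm : 0 ≤ ρm)
    (hρsum : ρp + ρm < 1)
    -- CCN channel: `Anoisy` flips `A` with probability `ρ⁺`/`ρ⁻`, independently of `Z` given `A`
    (hccn1 : ∀ U : Set 𝓩, MeasurableSet U →
      μ {ω | Z ω ∈ U ∧ A ω = 1 ∧ Anoisy ω = 0}
        = ENNReal.ofReal ρp * μ {ω | Z ω ∈ U ∧ A ω = 1} ∧
      μ {ω | Z ω ∈ U ∧ A ω = 1 ∧ Anoisy ω = 1}
        = ENNReal.ofReal (1 - ρp) * μ {ω | Z ω ∈ U ∧ A ω = 1})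
    (hccn0 : ∀ U : Set 𝓩, MeasurableSet U →
      μ {ω | Z ω ∈ U ∧ A ω = 0 ∧ Anoisy ω = 1}
        = ENNReal.ofReal ρm * μ {ω | Z ω ∈ U ∧ A ω = 0} ∧
      μ {ω | Z ω ∈ U ∧ A ω = 0 ∧ Anoisy ω = 0}
        = ENNReal.ofReal (1 - ρm) * μ {ω | Z ω ∈ U ∧ A ω = 0})
    (π : ℝ) (hπ : π = (μ {ω | A ω = 1}).toReal) (hπ0 : 0 < π) (hπ1 : π < 1)
    (α β : ℝ)
    (hαdef : α = (1 - π) * ρm / (π * (1 - ρp) + (1 - π) * ρm))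
    (hβdef : β = π * ρp / (π * ρp + (1 - π) * (1 - ρm)))
    (hden1 : 0 < π * (1 - ρp) + (1 - π) * ρm)
    (hden0 : 0 < π * ρp + (1 - π) * (1 - ρm)) :
    (μ[|{ω | Anoisy ω = 1}]).map Z
        = ENNReal.ofReal (1 - α) • (μ[|{ω | A ω = 1}]).map Z
          + ENNReal.ofReal α • (μ[|{ω | A ω = 0}]).map Z ∧
      (μ[|{ω | Anoisy ω = 0}]).map Z
        = ENNReal.ofReal β • (μ[|{ω | A ω = 1}]).map Z
          + ENNReal.ofReal (1 - β) • (μ[|{ω | A ω = 0}]).map Z ∧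
      α + β < 1 := by
  have hπA1 : μ {ω | A ω = 1} = ENNReal.ofReal π := by
    rw [hπ, ENNReal.ofReal_toReal (measure_ne_top μ _)]
  have hπA0 : μ {ω | A ω = 0} = ENNReal.ofReal (1 - π) := by
    have hA1 : MeasurableSet {ω | A ω = 1} := hA (measurableSet_singleton 1)
    rw [setOf_eq_zero_eq_compl, prob_compl_eq_one_sub hA1, hπA1,
      ENNReal.ofReal_sub 1 hπ0.le, ENNReal.ofReal_one]
  have hnoisy1 := map_restrict_eq_of_measure_inter_label hZ hA
    (hAn (measurableSet_singleton 1)) (fun U hU => (hccn1 U hU).2) (fun U hU => (hccn0 U hU).1)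
  have hnoisy0 := map_restrict_eq_of_measure_inter_label hZ hA
    (hAn (measurableSet_singleton 0)) (fun U hU => (hccn1 U hU).1) (fun U hU => (hccn0 U hU).2)
  have hα : α = ρm * (1 - π) / ((1 - ρp) * π + ρm * (1 - π)) := by rw [hαdef]; ring_nf
  have h1α : 1 - α = (1 - ρp) * π / ((1 - ρp) * π + ρm * (1 - π)) := by
    rw [hα, one_sub_div (by linarith)]; ring_nf
  have hβ : β = ρp * π / (ρp * π + (1 - ρm) * (1 - π)) := by rw [hβdef]; ring_nf
  have h1β : 1 - β = (1 - ρm) * (1 - π) / (ρp * π + (1 - ρm) * (1 - π)) := by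
    rw [hβ, one_sub_div (by linarith)]; ring_nf
  refine ⟨?_, ?_, hαdef ▸ hβdef ▸ ccn_weights_add_lt_one hπ0 hπ1 hρsum hden1 hden0⟩
  · rw [h1α, hα]
    exact map_cond_eq_ofReal_mixture hZ (by linarith) hρm hπ0.le (by linarith) (by linarith)
      hπA1 hπA0 hnoisy1
  · rw [h1β, hβ]
    exact map_cond_eq_ofReal_mixture hZ hρp (by linarith) hπ0.le (by linarith) (by linarith)
      hπA1 hπA0 hnoisy0

/-- CCN noise on a binary attribute yields corrupted conditional
distributions of MC form, with explicit mixing weights `α, β` and `α + β < 1`. -/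
theorem ccn_is_mc
    {Ω 𝓩 : Type*} [MeasurableSpace Ω] [MeasurableSpace 𝓩]
    (μ : Measure Ω) [IsProbabilityMeasure μ]
    (Z : Ω → 𝓩) (A Anoisy : Ω → Fin 2)
    (hZ : Measurable Z) (hA : Measurable A) (hAn : Measurable Anoisy)
    (ρp ρm : ℝ) (hρp : 0 ≤ ρp) (hρp1 : ρp < 1) (hρm : 0 ≤ ρm) (hρm1 : ρm < 1)
    (hρsum : ρp + ρm < 1)
    -- CCN channel: `Anoisy` flips `A` with probability `ρ⁺`/`ρ⁻`, independently of `Z` given `A`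
    (hccn1 : ∀ U : Set 𝓩, MeasurableSet U →
      μ {ω | Z ω ∈ U ∧ A ω = 1 ∧ Anoisy ω = 0}
        = ENNReal.ofReal ρp * μ {ω | Z ω ∈ U ∧ A ω = 1} ∧
      μ {ω | Z ω ∈ U ∧ A ω = 1 ∧ Anoisy ω = 1}
        = ENNReal.ofReal (1 - ρp) * μ {ω | Z ω ∈ U ∧ A ω = 1})
    (hccn0 : ∀ U : Set 𝓩, MeasurableSet U →
      μ {ω | Z ω ∈ U ∧ A ω = 0 ∧ Anoisy ω = 1}
        = ENNReal.ofReal ρm * μ {ω | Z ω ∈ U ∧ A ω = 0} ∧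
      μ {ω | Z ω ∈ U ∧ A ω = 0 ∧ Anoisy ω = 0}
        = ENNReal.ofReal (1 - ρm) * μ {ω | Z ω ∈ U ∧ A ω = 0})
    (π : ℝ) (hπ : π = (μ {ω | A ω = 1}).toReal) (hπ0 : 0 < π) (hπ1 : π < 1)
    (α β : ℝ)
    (hαdef : α = (1 - π) * ρm / (π * (1 - ρp) + (1 - π) * ρm))
    (hβdef : β = π * ρp / (π * ρp + (1 - π) * (1 - ρm)))
    (hden1 : 0 < π * (1 - ρp) + (1 - π) * ρm)
    (hden0 : 0 < π * ρp + (1 - π) * (1 - ρm)) :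
    (μ[|{ω | Anoisy ω = 1}]).map Z
        = ENNReal.ofReal (1 - α) • (μ[|{ω | A ω = 1}]).map Z
          + ENNReal.ofReal α • (μ[|{ω | A ω = 0}]).map Z ∧
      (μ[|{ω | Anoisy ω = 0}]).map Z
        = ENNReal.ofReal β • (μ[|{ω | A ω = 1}]).map Z
          + ENNReal.ofReal (1 - β) • (μ[|{ω | A ω = 0}]).map Z ∧
      α + β < 1 :=
  ccn_is_mc_general μ Z A Anoisy hZ hA hAn ρp ρm hρp hρm hρsum hccn1 hccn0 π hπ hπ0 hπ1 α β hαdef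
    hβdef hden1 hden0
end

section
/- Under CCN noise with equal flip probabilities ρ⁺ = ρ⁻ = ρ ∈ (0, 1/2) on a binary sensitive attribute, and for any bounded h, the corrupted mean-difference score satisfies |E[h | A_noisy=0] − E[h | A_noisy=1]| = c·|E[h | A=0] − E[h | A=1]| for some scaling constant c ∈ (0,1) depending only on ρ and the base rate π = P[A=1]; specifically c = 1 − α − β with α = (1−π)ρ/(π(1−ρ)+(1−π)ρ) and β = πρ/(πρ+(1−π)(1−ρ)). -/
open MeasureTheory ProbabilityTheory

/-!
Under symmetric label noise each noisy group `{Anoisy = b}` is a mixture of the clean groups: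
on `{A = a} ∩ {Anoisy = b}` the law of `Z` is the law of `Z` on `{A = a}` scaled by the flip
probability, so by Bayes' rule `E[h | Anoisy = 0] = (1 - β) E[h | A = 0] + β E[h | A = 1]` and
`E[h | Anoisy = 1] = α E[h | A = 0] + (1 - α) E[h | A = 1]`, with `α, β` the posterior
probabilities of a flip. Subtracting, the noisy mean difference is `(1 - α - β)` times the clean
one, and `α + β < 1` because `ρ < 1 - ρ`.
-/

section Mixture

variable {Ω 𝓩 : Type*} [MeasurableSpace Ω] [MeasurableSpace 𝓩] {μ : Measure Ω} {Z : Ω → 𝓩}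
  {t : Set Ω}

lemma integral_cond_eq_inv_mul_setIntegral (f : Ω → ℝ) (s : Set Ω) :
    ∫ ω, f ω ∂μ[|s] = (μ.real s)⁻¹ * ∫ ω in s, f ω ∂μ := by
  rw [ProbabilityTheory.cond, integral_smul_measure, ENNReal.toReal_inv, smul_eq_mul,
    measureReal_def]

lemma setIntegral_comp_eq_mul_of_measure_preimage_inter (hZ : Measurable Z) {h : 𝓩 → ℝ}
    (hh : Measurable h) {S T : Set Ω} {r : ℝ} (hr : 0 ≤ r)
    (hST : ∀ U, MeasurableSet U → μ (Z ⁻¹' U ∩ S) = ENNReal.ofReal r * μ (Z ⁻¹' U ∩ T)) :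
    ∫ ω in S, h (Z ω) ∂μ = r * ∫ ω in T, h (Z ω) ∂μ := by
  have hmap : (μ.restrict S).map Z = ENNReal.ofReal r • (μ.restrict T).map Z := by
    ext U hU
    rw [Measure.map_apply hZ hU, Measure.smul_apply, Measure.map_apply hZ hU,
      Measure.restrict_apply (hZ hU), Measure.restrict_apply (hZ hU), smul_eq_mul]
    exact hST U hU
  rw [← integral_map hZ.aemeasurable hh.aestronglyMeasurable, hmap, integral_smul_measure,
    ENNReal.toReal_ofReal hr, smul_eq_mul, integral_map hZ.aemeasurable hh.aestronglyMeasurable]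

section Fintype

variable {ι : Type*} [Fintype ι] [MeasurableSpace ι] [MeasurableSingletonClass ι] {A : Ω → ι}
  {p : ι → ℝ}

lemma setIntegral_eq_sum_mul_of_flip (hZ : Measurable Z) (hA : Measurable A)
    (ht : MeasurableSet t) (hp : ∀ a, 0 ≤ p a)
    (hflip : ∀ a U, MeasurableSet U →
      μ {ω | Z ω ∈ U ∧ A ω = a ∧ ω ∈ t} = ENNReal.ofReal (p a) * μ {ω | Z ω ∈ U ∧ A ω = a})
    {h : 𝓩 → ℝ} (hh : Measurable h) (hint : Integrable (fun ω ↦ h (Z ω)) μ) :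
    ∫ ω in t, h (Z ω) ∂μ = ∑ a, p a * ∫ ω in {ω | A ω = a}, h (Z ω) ∂μ := by
  have hfiber : ∀ a, MeasurableSet {ω | A ω = a} := fun a ↦ hA (measurableSet_singleton a)
  have hpartition : t = ⋃ a, {ω | A ω = a} ∩ t := by
    rw [← Set.iUnion_inter, eq_comm, Set.inter_eq_right]
    exact fun ω _ ↦ Set.mem_iUnion.2 ⟨A ω, rfl⟩
  have hdisj : Pairwise (Function.onFun Disjoint fun a ↦ {ω | A ω = a} ∩ t) := fun a b hab ↦
    Set.disjoint_left.2 fun ω ha hb ↦ hab (ha.1.symm.trans hb.1)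
  rw [hpartition, integral_iUnion_fintype (fun a ↦ (hfiber a).inter ht) hdisj
    (fun _ ↦ hint.integrableOn)]
  exact Finset.sum_congr rfl fun a _ ↦
    setIntegral_comp_eq_mul_of_measure_preimage_inter hZ hh (hp a) (hflip a)

lemma integral_cond_eq_sum_posterior_mul [IsFiniteMeasure μ] (hZ : Measurable Z)
    (hA : Measurable A) (ht : MeasurableSet t) (hp : ∀ a, 0 ≤ p a)
    (hflip : ∀ a U, MeasurableSet U →
      μ {ω | Z ω ∈ U ∧ A ω = a ∧ ω ∈ t} = ENNReal.ofReal (p a) * μ {ω | Z ω ∈ U ∧ A ω = a})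
    {h : 𝓩 → ℝ} (hh : Measurable h) (hint : Integrable (fun ω ↦ h (Z ω)) μ) :
    ∫ ω, h (Z ω) ∂μ[|t] = ∑ a, p a * μ.real {ω | A ω = a} /
      (∑ b, p b * μ.real {ω | A ω = b}) * ∫ ω, h (Z ω) ∂μ[|{ω | A ω = a}] := by
  have hmass : μ.real t = ∑ a, p a * μ.real {ω | A ω = a} := by
    simpa using setIntegral_eq_sum_mul_of_flip hZ hA ht hp hflip (h := fun _ ↦ (1 : ℝ))
      measurable_const (integrable_const 1)
  rw [integral_cond_eq_inv_mul_setIntegral, setIntegral_eq_sum_mul_of_flip hZ hA ht hp hflip hh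
    hint, hmass, Finset.mul_sum]
  refine Finset.sum_congr rfl fun a _ ↦ ?_
  rw [integral_cond_eq_inv_mul_setIntegral]
  by_cases hq : μ.real {ω | A ω = a} = 0
  · rw [setIntegral_measure_zero _ ((measureReal_eq_zero_iff).1 hq)]
    simp
  · field_simp

end Fintype

lemma integral_cond_eq_binary_mixture [IsProbabilityMeasure μ] {A : Ω → Fin 2}
    (hZ : Measurable Z) (hA : Measurable A) (ht : MeasurableSet t) {π : ℝ}
    (hπ : μ.real {ω | A ω = 1} = π) {p₀ p₁ : ℝ} (hp₀ : 0 ≤ p₀) (hp₁ : 0 ≤ p₁)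
    (hflip₀ : ∀ U, MeasurableSet U →
      μ {ω | Z ω ∈ U ∧ A ω = 0 ∧ ω ∈ t} = ENNReal.ofReal p₀ * μ {ω | Z ω ∈ U ∧ A ω = 0})
    (hflip₁ : ∀ U, MeasurableSet U →
      μ {ω | Z ω ∈ U ∧ A ω = 1 ∧ ω ∈ t} = ENNReal.ofReal p₁ * μ {ω | Z ω ∈ U ∧ A ω = 1})
    {h : 𝓩 → ℝ} (hh : Measurable h) (hint : Integrable (fun ω ↦ h (Z ω)) μ) :
    ∫ ω, h (Z ω) ∂μ[|t] =
      p₀ * (1 - π) / (p₀ * (1 - π) + p₁ * π) * ∫ ω, h (Z ω) ∂μ[|{ω | A ω = 0}] +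
        p₁ * π / (p₀ * (1 - π) + p₁ * π) * ∫ ω, h (Z ω) ∂μ[|{ω | A ω = 1}] := by
  have hmass₀ : μ.real {ω | A ω = 0} = 1 - π := by
    have hfiber₁ : MeasurableSet {ω | A ω = 1} := hA (measurableSet_singleton 1)
    rw [← hπ, ← probReal_compl_eq_one_sub hfiber₁]
    congr 1
    ext ω
    simp only [Set.mem_ofPred_eq, Set.mem_compl_iff]
    omega
  rw [integral_cond_eq_sum_posterior_mul (p := ![p₀, p₁]) hZ hA ht
    (Fin.forall_fin_two.2 ⟨hp₀, hp₁⟩) (Fin.forall_fin_two.2 ⟨hflip₀, hflip₁⟩) hh hint]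
  simp only [Fin.sum_univ_two, Matrix.cons_val_zero, Matrix.cons_val_one, hmass₀, hπ]

end Mixture

lemma one_sub_flip_posteriors_mem_Ioo {ρ π : ℝ} (hρ : ρ ∈ Set.Ioo (0:ℝ) (1 / 2))
    (hπ0 : 0 < π) (hπ1 : π < 1) :
    1 - (1 - π) * ρ / (π * (1 - ρ) + (1 - π) * ρ) - π * ρ / (π * ρ + (1 - π) * (1 - ρ))
      ∈ Set.Ioo (0:ℝ) 1 := by
  obtain ⟨hρ0, hρ2⟩ := hρ
  have hD1 : 0 < π * (1 - ρ) + (1 - π) * ρ := by nlinarith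
  have hD0 : 0 < π * ρ + (1 - π) * (1 - ρ) := by nlinarith
  have hα : 0 < (1 - π) * ρ / (π * (1 - ρ) + (1 - π) * ρ) := div_pos (by nlinarith) hD1
  have hβ : 0 < π * ρ / (π * ρ + (1 - π) * (1 - ρ)) := div_pos (by positivity) hD0
  have hsum : (1 - π) * ρ / (π * (1 - ρ) + (1 - π) * ρ) + π * ρ / (π * ρ + (1 - π) * (1 - ρ))
      < 1 := by
    rw [div_add_div _ _ hD1.ne' hD0.ne', div_lt_one (mul_pos hD1 hD0)]
    nlinarith [mul_pos (mul_pos hπ0 (sub_pos.2 hπ1)) (by linarith : (0:ℝ) < 1 - 2 * ρ)]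
  constructor <;> linarith

/-- under symmetric CCN noise (`ρ⁺ = ρ⁻ = ρ ∈ (0,1/2)`), the corrupted
mean-difference score of any bounded `h` equals `c` times the clean one, where
`c = 1 - α - β ∈ (0,1)` with explicit `α, β` depending only on `ρ` and `π`. -/
theorem symmetric_ccn_mean_difference_scaling
    {Ω 𝓩 : Type*} [MeasurableSpace Ω] [MeasurableSpace 𝓩]
    (μ : Measure Ω) [IsProbabilityMeasure μ]
    (Z : Ω → 𝓩) (A Anoisy : Ω → Fin 2)
    (hZ : Measurable Z) (hA : Measurable A) (hAn : Measurable Anoisy)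
    (ρ : ℝ) (hρ : ρ ∈ Set.Ioo (0:ℝ) (1/2))
    (hccn1 : ∀ U : Set 𝓩, MeasurableSet U →
      μ {ω | Z ω ∈ U ∧ A ω = 1 ∧ Anoisy ω = 0}
        = ENNReal.ofReal ρ * μ {ω | Z ω ∈ U ∧ A ω = 1} ∧
      μ {ω | Z ω ∈ U ∧ A ω = 1 ∧ Anoisy ω = 1}
        = ENNReal.ofReal (1 - ρ) * μ {ω | Z ω ∈ U ∧ A ω = 1})
    (hccn0 : ∀ U : Set 𝓩, MeasurableSet U →
      μ {ω | Z ω ∈ U ∧ A ω = 0 ∧ Anoisy ω = 1}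
        = ENNReal.ofReal ρ * μ {ω | Z ω ∈ U ∧ A ω = 0} ∧
      μ {ω | Z ω ∈ U ∧ A ω = 0 ∧ Anoisy ω = 0}
        = ENNReal.ofReal (1 - ρ) * μ {ω | Z ω ∈ U ∧ A ω = 0})
    (π : ℝ) (hπ : π = (μ {ω | A ω = 1}).toReal) (hπ0 : 0 < π) (hπ1 : π < 1)
    (h : 𝓩 → ℝ) (hmeas : Measurable h) (C : ℝ) (hbound : ∀ z, |h z| ≤ C) :
    ∃ c : ℝ, c ∈ Set.Ioo (0:ℝ) 1 ∧
      c = 1 - (1 - π) * ρ / (π * (1 - ρ) + (1 - π) * ρ)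
            - π * ρ / (π * ρ + (1 - π) * (1 - ρ)) ∧
      |(∫ ω, h (Z ω) ∂μ[|{ω | Anoisy ω = 0}]) - ∫ ω, h (Z ω) ∂μ[|{ω | Anoisy ω = 1}]|
        = c * |(∫ ω, h (Z ω) ∂μ[|{ω | A ω = 0}]) - ∫ ω, h (Z ω) ∂μ[|{ω | A ω = 1}]| := by
  have hint : Integrable (fun ω ↦ h (Z ω)) μ := (integrable_const C).mono'
    (hmeas.comp hZ).aestronglyMeasurable (ae_of_all _ fun ω ↦ hbound (Z ω))
  have hc := one_sub_flip_posteriors_mem_Ioo hρ hπ0 hπ1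
  obtain ⟨hρ0, hρ2⟩ := hρ
  have hD0 : π * ρ + (1 - π) * (1 - ρ) ≠ 0 := by nlinarith
  have hD1 : π * (1 - ρ) + (1 - π) * ρ ≠ 0 := by nlinarith
  set m₀ := ∫ ω, h (Z ω) ∂μ[|{ω | A ω = 0}]
  set m₁ := ∫ ω, h (Z ω) ∂μ[|{ω | A ω = 1}]
  set α := (1 - π) * ρ / (π * (1 - ρ) + (1 - π) * ρ)
  set β := π * ρ / (π * ρ + (1 - π) * (1 - ρ))
  have hnoisy0 : ∫ ω, h (Z ω) ∂μ[|{ω | Anoisy ω = 0}] = (1 - β) * m₀ + β * m₁ := by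
    rw [integral_cond_eq_binary_mixture (t := {ω | Anoisy ω = 0}) hZ hA
      (hAn (measurableSet_singleton 0)) hπ.symm (by linarith) hρ0.le
      (fun U hU ↦ (hccn0 U hU).2) (fun U hU ↦ (hccn1 U hU).1) hmeas hint,
      one_sub_div hD0, show π * ρ + (1 - π) * (1 - ρ) - π * ρ = (1 - ρ) * (1 - π) by ring,
      show (1 - ρ) * (1 - π) + ρ * π = π * ρ + (1 - π) * (1 - ρ) by ring, mul_comm ρ π]
  have hnoisy1 : ∫ ω, h (Z ω) ∂μ[|{ω | Anoisy ω = 1}] = α * m₀ + (1 - α) * m₁ := by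
    rw [integral_cond_eq_binary_mixture (t := {ω | Anoisy ω = 1}) hZ hA
      (hAn (measurableSet_singleton 1)) hπ.symm hρ0.le (by linarith)
      (fun U hU ↦ (hccn0 U hU).1) (fun U hU ↦ (hccn1 U hU).2) hmeas hint,
      one_sub_div hD1, show π * (1 - ρ) + (1 - π) * ρ - (1 - π) * ρ = (1 - ρ) * π by ring,
      show ρ * (1 - π) + (1 - ρ) * π = π * (1 - ρ) + (1 - π) * ρ by ring, mul_comm ρ (1 - π)]
  refine ⟨1 - α - β, hc, rfl, ?_⟩
  rw [hnoisy0, hnoisy1, show (1 - β) * m₀ + β * m₁ - (α * m₀ + (1 - α) * m₁)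
    = (1 - α - β) * (m₀ - m₁) by ring, abs_mul, abs_of_pos hc.1]
end
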